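/- arXiv:2304.04700 — 5 statements merged into one kernel-verified Lean document; each statement's English description precedes it below -/
import Mathlib

section
/- Let x* be the optimal solution to P.0 and y* the optimal solution to P.1 (maximize the multilinear extension F(y) over the polytope B). Then (1 − 1/e) · Σ_S x*_S f(S) ≤ F(y*). -/
/-- The multilinear extension of a set function `f`. -/
noncomputable def mle {V : Type*} [Fintype V] [DecidableEq V]
    (f : Finset V → ℝ) (y : V → ℝ) : ℝ :=
  ∑ S : Finset V, f S * ((∏ i ∈ S, y i) * ∏ i ∈ Sᶜ, (1 - y i))

/-- Feasibility for the LP `P.0`. -/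
def feasP0 {V : Type*} [Fintype V] [DecidableEq V] {m : ℕ}
    (Vs : Fin m → Finset V) (α β : Fin m → ℝ) (b : ℕ) (x : Finset V → ℝ) : Prop :=
  (∀ S, 0 ≤ x S) ∧ (∀ S, x S ≠ 0 → S.card ≤ b) ∧ (∑ S : Finset V, x S ≤ 1) ∧
    ∀ t, α t ≤ ∑ S : Finset V, x S * ((S ∩ Vs t).card : ℝ) ∧
      ∑ S : Finset V, x S * ((S ∩ Vs t).card : ℝ) ≤ β t

/-- Membership in the polytope `B` of `P.1`. -/
def inB {V : Type*} [Fintype V] [DecidableEq V] {m : ℕ}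
    (Vs : Fin m → Finset V) (α β : Fin m → ℝ) (b : ℕ) (y : V → ℝ) : Prop :=
  (∀ i, 0 ≤ y i ∧ y i ≤ 1) ∧
    (∀ t, α t ≤ ∑ i ∈ Vs t, y i ∧ ∑ i ∈ Vs t, y i ≤ β t) ∧
    ∑ i : V, y i ≤ (b : ℝ)

theorem stmt_4 {V : Type*} [Fintype V] [DecidableEq V] {m b : ℕ}
    (Vs : Fin m → Finset V) (hpart : ∀ i : V, ∃! t : Fin m, i ∈ Vs t)
    (α β : Fin m → ℝ) (hα : ∀ t, 0 ≤ α t) (hβ : ∀ t, 0 ≤ β t)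
    (f : Finset V → ℝ) (hnn : ∀ S, 0 ≤ f S)
    (hmono : ∀ X Y : Finset V, X ⊆ Y → f X ≤ f Y)
    (hsub : ∀ X Y : Finset V, X ⊆ Y → ∀ e ∉ Y,
      f (insert e Y) - f Y ≤ f (insert e X) - f X)
    (xstar : Finset V → ℝ) (hxfeas : feasP0 Vs α β b xstar)
    (hxopt : ∀ x : Finset V → ℝ, feasP0 Vs α β b x →
      ∑ S : Finset V, x S * f S ≤ ∑ S : Finset V, xstar S * f S)
    (ystar : V → ℝ) (hyB : inB Vs α β b ystar)
    (hyopt : ∀ y : V → ℝ, inB Vs α β b y → mle f y ≤ mle f ystar)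
    (hcg : ∀ x : Finset V → ℝ, (∀ S, 0 ≤ x S) → (∑ S : Finset V, x S ≤ 1) →
      (1 - 1 / Real.exp 1) * (∑ S : Finset V, x S * f S) ≤
        mle f (fun i => ∑ S : Finset V, if i ∈ S then x S else 0)) :
    (1 - 1 / Real.exp 1) * ∑ S : Finset V, xstar S * f S ≤ mle f ystar := by

  obtain ⟨hx0, hxb, hx1, hxt⟩ := hxfeas
  set yh : V → ℝ := fun i => ∑ S : Finset V, if i ∈ S then xstar S else 0 with hyh
  have key : ∀ T : Finset V, ∑ i ∈ T, yh i
      = ∑ S : Finset V, xstar S * ((S ∩ T).card : ℝ) := by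
    intro T
    rw [show (∑ i ∈ T, yh i) = ∑ i ∈ T, ∑ S : Finset V, if i ∈ S then xstar S else 0 from rfl,
      Finset.sum_comm]
    refine Finset.sum_congr rfl fun S _ => ?_
    rw [Finset.sum_ite_mem, Finset.inter_comm, Finset.sum_const, nsmul_eq_mul, mul_comm]
  have hyB' : inB Vs α β b yh := by
    refine ⟨fun i => ⟨?_, ?_⟩, fun t => ?_, ?_⟩
    · exact Finset.sum_nonneg fun S _ => by split <;> simp [hx0 S]
    · calc (∑ S : Finset V, if i ∈ S then xstar S else 0) ≤ ∑ S : Finset V, xstar S :=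
            Finset.sum_le_sum fun S _ => by split <;> simp [hx0 S]
        _ ≤ 1 := hx1
    · rw [key (Vs t)]; exact hxt t
    · have := key Finset.univ
      simp only [Finset.inter_univ] at this
      rw [this]
      calc ∑ S : Finset V, xstar S * (S.card : ℝ)
          ≤ ∑ S : Finset V, xstar S * (b : ℝ) := by
            refine Finset.sum_le_sum fun S _ => ?_
            rcases eq_or_ne (xstar S) 0 with h | h
            · simp [h]
            · exact mul_le_mul_of_nonneg_left (by exact_mod_cast hxb S h) (hx0 S)
        _ = (∑ S : Finset V, xstar S) * (b : ℝ) := by rw [Finset.sum_mul]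
        _ ≤ 1 * (b : ℝ) := by
            exact mul_le_mul_of_nonneg_right hx1 (by positivity)
        _ = (b : ℝ) := one_mul _
  calc (1 - 1 / Real.exp 1) * ∑ S : Finset V, xstar S * f S ≤ mle f yh :=
        hcg xstar hx0 hx1
    _ ≤ mle f ystar := hyopt yh hyB'
end

section
/- Let f be a monotone submodular function with multilinear extension F, let y ∈ [0,1]^V, and let i, j be two coordinates with 0 < y_i < 1 and 0 < y_j < 1. Define θ₁ = min{1 − y_i, y_j}, θ₂ = min{y_i, 1 − y_j}, y^a = y + θ₁(e_i − e_j), and y^b = y + θ₂(e_j − e_i). Then max{F(y^a), F(y^b)} ≥ F(y). -/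
theorem stmt_7 {V : Type*} [Fintype V] [DecidableEq V] (f : Finset V → ℝ)
    (hmono : ∀ X Y : Finset V, X ⊆ Y → f X ≤ f Y)
    (hsub : ∀ X Y : Finset V, X ⊆ Y → ∀ e ∉ Y,
      f (insert e Y) - f Y ≤ f (insert e X) - f X)
    (y : V → ℝ) (hy : ∀ k, 0 ≤ y k ∧ y k ≤ 1)
    (i j : V) (hij : i ≠ j)
    (hi : 0 < y i ∧ y i < 1) (hj : 0 < y j ∧ y j < 1) :
    mle f y ≤
      max
        (mle f (fun k => y k + min (1 - y i) (y j) *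
          ((if k = i then (1 : ℝ) else 0) - (if k = j then 1 else 0))))
        (mle f (fun k => y k + min (y i) (1 - y j) *
          ((if k = j then (1 : ℝ) else 0) - (if k = i then 1 else 0)))) := by
  obtain ⟨hi0, hi1⟩ := hi
  obtain ⟨hj0, hj1⟩ := hj
  set U : Finset V := (Finset.univ.erase j).erase i with hUdef
  have hiU : i ∉ U := Finset.notMem_erase _ _
  have hjU : j ∉ U := by simp [hUdef, hij]
  have hijU : i ∉ insert j U := by simp [hij, hiU]
  have huniv : (Finset.univ : Finset V) = insert i (insert j U) := by
    ext k
    simp only [hUdef, Finset.mem_insert, Finset.mem_erase, Finset.mem_univ, iff_true,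
      and_true]
    tauto
  set z : ℝ → V → ℝ := fun t k =>
    y k + t * ((if k = i then (1:ℝ) else 0) - (if k = j then 1 else 0)) with hz
  have hzi : ∀ t, z t i = y i + t := by intro t; simp [hz, hij]
  have hzj : ∀ t, z t j = y j - t := by
    intro t
    show y j + t * ((if j = i then (1:ℝ) else 0) - (if j = j then 1 else 0)) = y j - t
    rw [if_neg (Ne.symm hij), if_pos rfl]; ring
  have hzk : ∀ t k, k ≠ i → k ≠ j → z t k = y k := by
    intro t k h1 h2; simp [hz, h1, h2]
  have key : ∀ t : ℝ, mle f (z t) =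
      ∑ T ∈ U.powerset,
        ((∏ k ∈ T, y k) * ∏ k ∈ (insert i (insert j T))ᶜ, (1 - y k)) *
        (f T * ((1 - y i - t) * (1 - y j + t))
         + f (insert j T) * ((y j - t) * (1 - y i - t))
         + f (insert i T) * ((y i + t) * (1 - y j + t))
         + f (insert i (insert j T)) * ((y i + t) * (y j - t))) := by
    intro t
    unfold mle
    rw [← Finset.powerset_univ, huniv, Finset.sum_powerset_insert hijU,
      Finset.sum_powerset_insert hjU, Finset.sum_powerset_insert hjU,
      ← Finset.sum_add_distrib, ← Finset.sum_add_distrib, ← Finset.sum_add_distrib]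
    refine Finset.sum_congr rfl ?_
    intro T hT
    rw [Finset.mem_powerset] at hT
    have hiT : i ∉ T := fun h => hiU (hT h)
    have hjT : j ∉ T := fun h => hjU (hT h)
    have hijT : i ∉ insert j T := by simp [hij, hiT]
    set D : Finset V := (insert i (insert j T))ᶜ with hDdef
    have hiD : i ∉ D := by simp [hDdef]
    have hjD : j ∉ D := by simp [hDdef]
    have hijD : i ∉ insert j D := by simp [hij, hiD]
    have hmemD : ∀ k ∈ D, k ≠ i ∧ k ≠ j := by
      intro k hk
      simp only [hDdef, Finset.mem_compl, Finset.mem_insert, not_or] at hk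
      exact ⟨hk.1, hk.2.1⟩
    have hmemT : ∀ k ∈ T, k ≠ i ∧ k ≠ j := by
      intro k hk
      exact ⟨fun h => hiT (h ▸ hk), fun h => hjT (h ▸ hk)⟩
    have hPT : ∏ k ∈ T, z t k = ∏ k ∈ T, y k :=
      Finset.prod_congr rfl fun k hk => hzk t k (hmemT k hk).1 (hmemT k hk).2
    have hQD : ∏ k ∈ D, (1 - z t k) = ∏ k ∈ D, (1 - y k) :=
      Finset.prod_congr rfl fun k hk => by rw [hzk t k (hmemD k hk).1 (hmemD k hk).2]
    have hD1 : Tᶜ = insert i (insert j D) := by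
      ext k
      simp only [hDdef, Finset.mem_compl, Finset.mem_insert, not_or]
      constructor
      · intro h
        by_cases h1 : k = i
        · exact Or.inl h1
        · by_cases h2 : k = j
          · exact Or.inr (Or.inl h2)
          · exact Or.inr (Or.inr ⟨h1, h2, h⟩)
      · rintro (rfl | rfl | h)
        · exact hiT
        · exact hjT
        · exact h.2.2
    have hD2 : (insert j T)ᶜ = insert i D := by
      ext k
      simp only [hDdef, Finset.mem_compl, Finset.mem_insert, not_or]
      constructor
      · intro h
        by_cases h1 : k = i
        · exact Or.inl h1
        · exact Or.inr ⟨h1, h.1, h.2⟩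
      · rintro (rfl | h)
        · exact ⟨hij, hiT⟩
        · exact ⟨h.2.1, h.2.2⟩
    have hD3 : (insert i T)ᶜ = insert j D := by
      ext k
      simp only [hDdef, Finset.mem_compl, Finset.mem_insert, not_or]
      constructor
      · intro h
        by_cases h2 : k = j
        · exact Or.inl h2
        · exact Or.inr ⟨h.1, h2, h.2⟩
      · rintro (rfl | h)
        · exact ⟨Ne.symm hij, hjT⟩
        · exact ⟨h.1, h.2.2⟩
    have e0 : (∏ k ∈ T, z t k) * ∏ k ∈ Tᶜ, (1 - z t k)
        = (1 - (y i + t)) * ((1 - (y j - t)) * ((∏ k ∈ T, y k) * ∏ k ∈ D, (1 - y k))) := by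
      rw [hD1, Finset.prod_insert hijD, Finset.prod_insert hjD, hPT, hQD, hzi, hzj]
      ring
    have e1 : (∏ k ∈ insert j T, z t k) * ∏ k ∈ (insert j T)ᶜ, (1 - z t k)
        = (y j - t) * ((1 - (y i + t)) * ((∏ k ∈ T, y k) * ∏ k ∈ D, (1 - y k))) := by
      rw [hD2, Finset.prod_insert hjT, Finset.prod_insert hiD, hPT, hQD, hzi, hzj]
      ring
    have e2 : (∏ k ∈ insert i T, z t k) * ∏ k ∈ (insert i T)ᶜ, (1 - z t k)
        = (y i + t) * ((1 - (y j - t)) * ((∏ k ∈ T, y k) * ∏ k ∈ D, (1 - y k))) := by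
      rw [hD3, Finset.prod_insert hiT, Finset.prod_insert hjD, hPT, hQD, hzi, hzj]
      ring
    have e3 : (∏ k ∈ insert i (insert j T), z t k) *
          ∏ k ∈ (insert i (insert j T))ᶜ, (1 - z t k)
        = (y i + t) * ((y j - t) * ((∏ k ∈ T, y k) * ∏ k ∈ D, (1 - y k))) := by
      rw [Finset.prod_insert hijT, Finset.prod_insert hjT, ← hDdef, hPT, hQD, hzi, hzj]
      ring
    rw [e0, e1, e2, e3]
    ring
  set w : Finset V → ℝ := fun T =>
    (∏ k ∈ T, y k) * ∏ k ∈ (insert i (insert j T))ᶜ, (1 - y k) with hwdef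
  have hw : ∀ T, 0 ≤ w T := fun T =>
    mul_nonneg (Finset.prod_nonneg fun k _ => (hy k).1)
      (Finset.prod_nonneg fun k _ => by linarith [(hy k).2])
  set a : ℝ := ∑ T ∈ U.powerset, w T *
      (f T * ((1 - y i) * (1 - y j)) + f (insert j T) * (y j * (1 - y i))
       + f (insert i T) * (y i * (1 - y j)) + f (insert i (insert j T)) * (y i * y j))
    with hadef
  set b : ℝ := ∑ T ∈ U.powerset, w T *
      (f T * ((1 - y i) - (1 - y j)) + f (insert j T) * (-(1 - y i) - y j)
       + f (insert i T) * ((1 - y j) + y i) + f (insert i (insert j T)) * (y j - y i))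
    with hbdef
  set c : ℝ := ∑ T ∈ U.powerset, w T *
      (f (insert i T) + f (insert j T) - f T - f (insert i (insert j T))) with hcdef
  have hquad : ∀ t, mle f (z t) = a + b * t + c * t ^ 2 := by
    intro t
    rw [key t, hadef, hbdef, hcdef, Finset.sum_mul, Finset.sum_mul,
      ← Finset.sum_add_distrib, ← Finset.sum_add_distrib]
    refine Finset.sum_congr rfl ?_
    intro T hT
    ring
  have hc : 0 ≤ c := by
    refine Finset.sum_nonneg ?_
    intro T hT
    rw [Finset.mem_powerset] at hT
    have hiT : i ∉ T := fun h => hiU (hT h)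
    have hjT : j ∉ T := fun h => hjU (hT h)
    have hijT : i ∉ insert j T := by simp [hij, hiT]
    have := hsub T (insert j T) (Finset.subset_insert _ _) i hijT
    exact mul_nonneg (hw T) (by linarith)
  have hy0 : mle f y = a := by
    have hz0 : z 0 = y := by funext k; simp [hz]
    have := hquad 0
    rw [hz0] at this
    simpa using this
  set θ₁ : ℝ := min (1 - y i) (y j) with hθ₁
  set θ₂ : ℝ := min (y i) (1 - y j) with hθ₂
  have hθ₁0 : 0 < θ₁ := lt_min (by linarith) hj0
  have hθ₂0 : 0 < θ₂ := lt_min hi0 (by linarith)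
  have harg1 : (fun k => y k + θ₁ *
      ((if k = i then (1 : ℝ) else 0) - (if k = j then 1 else 0))) = z θ₁ := rfl
  have harg2 : (fun k => y k + θ₂ *
      ((if k = j then (1 : ℝ) else 0) - (if k = i then 1 else 0))) = z (-θ₂) := by
    funext k; simp only [hz]; ring
  rw [hy0, harg1, harg2, hquad θ₁, hquad (-θ₂)]
  by_contra hcon
  push_neg at hcon
  rw [max_lt_iff] at hcon
  obtain ⟨h1, h2⟩ := hcon
  nlinarith [mul_pos hθ₁0 hθ₂0, mul_nonneg hc (mul_pos hθ₁0 hθ₂0).le, sq_nonneg θ₁, sq_nonneg θ₂]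
end

section
/- Let V be partitioned into disjoint groups V_1, …, V_m, let b be a positive integer and let ℓ_t, u_t be nonnegative integers with Σ_t ℓ_t ≤ b and ℓ_t ≤ u_t ≤ |V_t| for all t. Then the family I = { S ⊆ V : |S ∩ V_t| ≤ u_t for all t, and Σ_{t} max{ℓ_t, |S ∩ V_t|} ≤ b } is the family of independent sets of a matroid on V. -/
/-- The family of sets satisfying the relaxed fairness constraints of `P.3`. -/
def IndSet {V : Type*} [DecidableEq V] {m : ℕ}
    (Vs : Fin m → Finset V) (l u : Fin m → ℕ) (b : ℕ) (S : Finset V) : Prop :=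
  (∀ t, (S ∩ Vs t).card ≤ u t) ∧ ∑ t, max (l t) ((S ∩ Vs t).card) ≤ b

theorem stmt_10 {V : Type*} [Fintype V] [DecidableEq V] {m b : ℕ} (hb : 0 < b)
    (Vs : Fin m → Finset V) (hpart : ∀ i : V, ∃! t : Fin m, i ∈ Vs t)
    (l u : Fin m → ℕ) (hlb : ∑ t, l t ≤ b) (hlu : ∀ t, l t ≤ u t)
    (hu : ∀ t, u t ≤ (Vs t).card) :
    IndSet Vs l u b (∅ : Finset V) ∧
    (∀ S T : Finset V, T ⊆ S → IndSet Vs l u b S → IndSet Vs l u b T) ∧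
    (∀ S T : Finset V, IndSet Vs l u b S → IndSet Vs l u b T →
      S.card < T.card → ∃ e ∈ T \ S, IndSet Vs l u b (insert e S)) := by
  classical
  -- cardinality decomposes along the partition
  have hcard : ∀ S : Finset V, S.card = ∑ t, (S ∩ Vs t).card := by
    intro S
    calc S.card = ∑ i ∈ S, 1 := by simp
      _ = ∑ i ∈ S, ∑ t, (if i ∈ Vs t then 1 else 0) := by
          refine Finset.sum_congr rfl fun i _ => ?_
          obtain ⟨t0, h0, hun⟩ := hpart i
          rw [Finset.sum_eq_single t0]
          · simp [h0]
          · intro t _ ht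
            rw [if_neg fun h => ht (hun t h)]
          · intro h; exact absurd (Finset.mem_univ t0) h
      _ = ∑ t, ∑ i ∈ S, (if i ∈ Vs t then 1 else 0) := Finset.sum_comm
      _ = ∑ t, (S ∩ Vs t).card := by
          refine Finset.sum_congr rfl fun t _ => ?_
          rw [← Finset.card_filter, Finset.filter_mem_eq_inter]
  -- how cardinalities change under insertion of a new element
  have hins : ∀ (S : Finset V) (e : V), e ∉ S → ∀ t,
      ((insert e S) ∩ Vs t).card =
        (S ∩ Vs t).card + (if e ∈ Vs t then 1 else 0) := by
    intro S e heS t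
    by_cases h : e ∈ Vs t
    · rw [if_pos h, Finset.insert_inter_of_mem h,
        Finset.card_insert_of_notMem fun hh => heS (Finset.mem_inter.1 hh).1]
    · rw [if_neg h, Finset.insert_inter_of_notMem h, Nat.add_zero]
  refine ⟨⟨fun t => by simp, by simpa using hlb⟩, ?_, ?_⟩
  · -- downward closed
    intro S T hTS ⟨hS1, hS2⟩
    refine ⟨fun t => le_trans (Finset.card_le_card
      (Finset.inter_subset_inter_right hTS)) (hS1 t), le_trans ?_ hS2⟩
    exact Finset.sum_le_sum fun t _ => max_le_max le_rfl
      (Finset.card_le_card (Finset.inter_subset_inter_right hTS))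
  · -- exchange
    intro S T hS hT hST
    -- find an element of T \ S in a given group where T is bigger
    have hfind : ∀ t, (S ∩ Vs t).card < (T ∩ Vs t).card →
        ∃ e, e ∈ T ∧ e ∈ Vs t ∧ e ∉ S := by
      intro t ht
      have hns : ¬ (T ∩ Vs t ⊆ S ∩ Vs t) :=
        fun h => absurd (Finset.card_le_card h) (not_le.2 ht)
      obtain ⟨e, he1, he2⟩ := Finset.not_subset.1 hns
      obtain ⟨heT, heV⟩ := Finset.mem_inter.1 he1
      exact ⟨e, heT, heV, fun hS' => he2 (Finset.mem_inter.2 ⟨hS', heV⟩)⟩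
    by_cases hA : ∃ t, (S ∩ Vs t).card < (T ∩ Vs t).card ∧ (S ∩ Vs t).card < l t
    · -- Case A: insert into a group still below its lower bound
      obtain ⟨t0, ht1, ht2⟩ := hA
      obtain ⟨e, heT, heV, heS⟩ := hfind t0 ht1
      have huniq : ∀ t, e ∈ Vs t → t = t0 := fun t h => by
        obtain ⟨t', _, hun⟩ := hpart e
        rw [hun t h, hun t0 heV]
      refine ⟨e, Finset.mem_sdiff.2 ⟨heT, heS⟩, fun t => ?_, ?_⟩
      · rw [hins S e heS t]
        by_cases h : e ∈ Vs t
        · rw [huniq t h] at *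
          rw [if_pos heV]
          have := hlu t0
          omega
        · rw [if_neg h]; simpa using hS.1 t
      · have : ∀ t, max (l t) (((insert e S) ∩ Vs t).card) =
            max (l t) ((S ∩ Vs t).card) := by
          intro t
          rw [hins S e heS t]
          by_cases h : e ∈ Vs t
          · rw [huniq t h] at *
            rw [if_pos heV]
            omega
          · rw [if_neg h, Nat.add_zero]
        rw [Finset.sum_congr rfl fun t _ => this t]
        exact hS.2
    · -- Case B: every group where T is bigger has already met its lower bound
      push_neg at hA
      have hex : ∃ t0, (S ∩ Vs t0).card < (T ∩ Vs t0).card := by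
        by_contra h
        push_neg at h
        have : T.card ≤ S.card := by
          rw [hcard S, hcard T]
          exact Finset.sum_le_sum fun t _ => h t
        omega
      obtain ⟨t0, ht0⟩ := hex
      obtain ⟨e, heT, heV, heS⟩ := hfind t0 ht0
      have huniq : ∀ t, e ∈ Vs t → t = t0 := fun t h => by
        obtain ⟨t', _, hun⟩ := hpart e
        rw [hun t h, hun t0 heV]
      -- key bound : ∑ max(l, cS) + 1 ≤ b
      have hkey : ∑ t, max (l t) ((S ∩ Vs t).card) + 1 ≤ b := by
        have hterm : ∀ t ∈ Finset.univ,
            max (l t) ((S ∩ Vs t).card) + (T ∩ Vs t).card ≤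
            max (l t) ((T ∩ Vs t).card) + (S ∩ Vs t).card := by
          intro t _
          rcases lt_or_ge ((S ∩ Vs t).card) ((T ∩ Vs t).card) with h | h
          · have := hA t h; omega
          · omega
        have hsum := Finset.sum_le_sum hterm
        rw [Finset.sum_add_distrib, Finset.sum_add_distrib, ← hcard S, ← hcard T]
          at hsum
        have := hS.2
        have := hT.2
        omega
      refine ⟨e, Finset.mem_sdiff.2 ⟨heT, heS⟩, fun t => ?_, ?_⟩
      · rw [hins S e heS t]
        by_cases h : e ∈ Vs t
        · obtain rfl := huniq t h
          rw [if_pos h]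
          have := hT.1 t
          omega
        · rw [if_neg h]; simpa using hS.1 t
      · have hle : ∑ t, max (l t) (((insert e S) ∩ Vs t).card) ≤
            ∑ t, (max (l t) ((S ∩ Vs t).card) + if t = t0 then 1 else 0) := by
          refine Finset.sum_le_sum fun t _ => ?_
          rw [hins S e heS t]
          by_cases h : e ∈ Vs t
          · obtain rfl := huniq t h
            rw [if_pos h, if_pos rfl]
            omega
          · rw [if_neg h, if_neg (by rintro rfl; exact h heV)]
            omega
        rw [Finset.sum_add_distrib, Finset.sum_ite_eq' Finset.univ t0
          (fun _ => 1)] at hle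
        simp only [Finset.mem_univ, if_pos] at hle
        omega
end

section
/- Let μ = 1 − 1/e. Suppose (z*, u*, w*) with z*, u* ∈ ℝ≥0^m and w* ≥ 0 satisfies: (i) for the set A returned by the approximation algorithm, f(A) + Σ_t |A ∩ V_t|(z*_t − u*_t) ≤ w*, and (ii) for every S ∈ F, f(A) + Σ_t |A ∩ V_t|(z*_t − u*_t) ≥ μ f(S) + Σ_t |S ∩ V_t|(z*_t − u*_t). Then (z*/μ, u*/μ, w*/μ) is feasible for the Dual of P.0, i.e., for every S ∈ F: w*/μ ≥ f(S) + Σ_t |S ∩ V_t| · (z*_t − u*_t)/μ. -/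
theorem stmt_13 {V : Type*} [Fintype V] [DecidableEq V] {m b : ℕ}
    (Vs : Fin m → Finset V) (f : Finset V → ℝ) (hnn : ∀ S, 0 ≤ f S)
    (z u : Fin m → ℝ) (w : ℝ)
    (hz : ∀ t, 0 ≤ z t) (hu : ∀ t, 0 ≤ u t) (hw : 0 ≤ w)
    (A : Finset V) (hA : A.card ≤ b)
    (h1 : f A + ∑ t, ((A ∩ Vs t).card : ℝ) * (z t - u t) ≤ w)
    (h2 : ∀ S : Finset V, S.card ≤ b →
      (1 - 1 / Real.exp 1) * f S + ∑ t, ((S ∩ Vs t).card : ℝ) * (z t - u t) ≤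
        f A + ∑ t, ((A ∩ Vs t).card : ℝ) * (z t - u t)) :
    ∀ S : Finset V, S.card ≤ b →
      f S + ∑ t, ((S ∩ Vs t).card : ℝ) * ((z t - u t) / (1 - 1 / Real.exp 1)) ≤
        w / (1 - 1 / Real.exp 1) := by
  intro S hS
  have he : 1 < Real.exp 1 := by
    have := Real.exp_one_gt_d9; linarith
  have hμ : 0 < 1 - 1 / Real.exp 1 := by
    have : 1 / Real.exp 1 < 1 := by
      rw [div_lt_one (Real.exp_pos 1)]; exact he
    linarith
  have key : (1 - 1 / Real.exp 1) * f S + ∑ t, ((S ∩ Vs t).card : ℝ) * (z t - u t) ≤ w :=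
    le_trans (h2 S hS) h1
  have hsum : ∑ t, ((S ∩ Vs t).card : ℝ) * ((z t - u t) / (1 - 1 / Real.exp 1)) =
      (∑ t, ((S ∩ Vs t).card : ℝ) * (z t - u t)) / (1 - 1 / Real.exp 1) := by
    rw [Finset.sum_div]
    exact Finset.sum_congr rfl fun t _ => by ring
  rw [hsum]
  have heq : f S + (∑ t, ((S ∩ Vs t).card : ℝ) * (z t - u t)) / (1 - 1 / Real.exp 1) =
      ((1 - 1 / Real.exp 1) * f S + ∑ t, ((S ∩ Vs t).card : ℝ) * (z t - u t)) /
        (1 - 1 / Real.exp 1) := by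
    rw [eq_div_iff hμ.ne', add_mul, div_mul_cancel₀ _ hμ.ne', mul_comm]
  rw [heq]
  gcongr
end

section
/- Convexity along swap directions: for monotone submodular f with multilinear extension F, fixed y ∈ [0,1]^V, and distinct coordinates i, j, the function φ(t) = F(y + t(e_i − e_j)) is convex on the interval of t for which y + t(e_i − e_j) ∈ [0,1]^V. -/
open Finset

lemma prod_split {α : Type*} [DecidableEq α] (s : Finset α) (a : α) (h : α → ℝ) :
    ∏ k ∈ s, h k = (if a ∈ s then h a else 1) * ∏ k ∈ s.erase a, h k := by
  by_cases ha : a ∈ s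
  · simp only [ha, if_true]
    exact (Finset.mul_prod_erase s h ha).symm
  · simp [ha, Finset.erase_eq_of_notMem ha]

section main
variable {V : Type*} [Fintype V] [DecidableEq V] (y : V → ℝ) (i j : V)

/-- the part of the product not involving `i`, `j` -/
noncomputable def Pfix (S : Finset V) : ℝ :=
  (∏ k ∈ (S.erase i).erase j, y k) * ∏ k ∈ (Sᶜ.erase i).erase j, (1 - y k)

lemma key_term (hij : i ≠ j) (S : Finset V) (t : ℝ) :
    (∏ k ∈ S, (y k + t * ((if k = i then (1:ℝ) else 0) - (if k = j then 1 else 0)))) *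
      ∏ k ∈ Sᶜ, (1 - (y k + t * ((if k = i then (1:ℝ) else 0) - (if k = j then 1 else 0)))) =
    ((if i ∈ S then y i else 1 - y i) + (if i ∈ S then (1:ℝ) else -1) * t) *
    (((if j ∈ S then y j else 1 - y j) + (if j ∈ S then (-1:ℝ) else 1) * t)) * Pfix y i j S := by
  set y' : V → ℝ := fun k => y k + t * ((if k = i then (1:ℝ) else 0) - (if k = j then 1 else 0)) with hy'
  rw [prod_split S i y', prod_split (S.erase i) j y', prod_split Sᶜ i (fun k => 1 - y' k),
    prod_split (Sᶜ.erase i) j (fun k => 1 - y' k)]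
  have h1 : ∀ k ∈ (S.erase i).erase j, y' k = y k := by
    intro k hk
    simp only [mem_erase] at hk
    simp [hy', hk.1, hk.2.1]
  have h2 : ∀ k ∈ (Sᶜ.erase i).erase j, 1 - y' k = 1 - y k := by
    intro k hk
    simp only [mem_erase] at hk
    simp [hy', hk.1, hk.2.1]
  rw [Finset.prod_congr rfl h1, Finset.prod_congr rfl h2]
  have hyi : y' i = y i + t := by simp [hy', hij]
  have hyj : y' j = y j - t := by simp [hy', hij.symm]; ring
  by_cases hiS : i ∈ S <;> by_cases hjS : j ∈ S <;>
    simp [Pfix, hiS, hjS, hij, hij.symm, Finset.mem_erase, Finset.mem_compl, hyi, hyj] <;> ring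

lemma Pfix_nonneg (hk : ∀ k, k ≠ i → k ≠ j → 0 ≤ y k ∧ y k ≤ 1) (S : Finset V) :
    0 ≤ Pfix y i j S := by
  apply mul_nonneg <;> apply Finset.prod_nonneg <;> intro k hkm <;>
    simp only [mem_erase] at hkm
  · exact (hk k hkm.2.1 hkm.1).1
  · linarith [(hk k hkm.2.1 hkm.1).2]

lemma Pfix_insert_i (T : Finset V) (hi : i ∉ T) :
    Pfix y i j (insert i T) = Pfix y i j T := by
  unfold Pfix
  rw [Finset.erase_insert hi, Finset.compl_insert, Finset.erase_idem,
    Finset.erase_eq_of_notMem hi]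

lemma Pfix_insert_j (T : Finset V) (hj : j ∉ T) :
    Pfix y i j (insert j T) = Pfix y i j T := by
  unfold Pfix
  rw [Finset.erase_right_comm, Finset.erase_insert hj, Finset.compl_insert,
    Finset.erase_right_comm (a := i) (b := j), Finset.erase_idem,
    Finset.erase_eq_of_notMem (show j ∉ T.erase i from fun h => hj (Finset.mem_of_mem_erase h))]
  rw [Finset.erase_right_comm]

lemma c_nonneg (f : Finset V → ℝ)
    (hsub : ∀ X Y : Finset V, X ⊆ Y → ∀ e ∉ Y,
      f (insert e Y) - f Y ≤ f (insert e X) - f X)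
    (hij : i ≠ j) (hk : ∀ k, k ≠ i → k ≠ j → 0 ≤ y k ∧ y k ≤ 1) :
    0 ≤ ∑ S : Finset V, f S * ((if i ∈ S then (1:ℝ) else -1) *
      ((if j ∈ S then (-1:ℝ) else 1) * Pfix y i j S)) := by
  set g : Finset V → ℝ := fun S => f S * ((if i ∈ S then (1:ℝ) else -1) *
      ((if j ∈ S then (-1:ℝ) else 1) * Pfix y i j S)) with hg
  set w : Finset V := (Finset.univ.erase i).erase j with hw
  have hjw : j ∉ insert i w := by simp [hw, hij.symm, Finset.mem_erase]
  have hiw : i ∉ w := by simp [hw, Finset.mem_erase]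
  have huniv : (Finset.univ : Finset V) = insert j (insert i w) := by
    ext k; simp [hw]; tauto
  have hsum : ∑ S : Finset V, g S = ∑ T ∈ w.powerset,
      (g T + g (insert i T) + (g (insert j T) + g (insert j (insert i T)))) := by
    rw [show (Finset.univ : Finset (Finset V)) = (Finset.univ : Finset V).powerset from
      Finset.powerset_univ.symm, huniv, Finset.sum_powerset_insert hjw,
      Finset.sum_powerset_insert hiw, Finset.sum_powerset_insert hiw,
      ← Finset.sum_add_distrib, ← Finset.sum_add_distrib, ← Finset.sum_add_distrib]
  rw [hsum]
  apply Finset.sum_nonneg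
  intro T hT
  rw [Finset.mem_powerset] at hT
  have hiT : i ∉ T := fun h => hiw (hT h)
  have hjT : j ∉ T := fun h => by have := hT h; simp [hw, Finset.mem_erase] at this
  have hjiT : j ∉ insert i T := by simp [hij.symm, hjT]
  have hijT : i ∉ insert j T := by simp [hij, hiT]
  have e1 : g T = -(f T * Pfix y i j T) := by simp [hg, hiT, hjT]
  have e2 : g (insert i T) = f (insert i T) * Pfix y i j T := by
    simp [hg, hjiT, Pfix_insert_i y i j T hiT]
  have e3 : g (insert j T) = f (insert j T) * Pfix y i j T := by
    simp [hg, hijT, hij.symm, Pfix_insert_j y i j T hjT]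
  have e4 : g (insert j (insert i T)) = -(f (insert j (insert i T)) * Pfix y i j T) := by
    simp [hg, hij.symm, Pfix_insert_j y i j _ hjiT, Pfix_insert_i y i j T hiT]
  rw [e1, e2, e3, e4]
  have hb := hsub T (insert i T) (Finset.subset_insert i T) j hjiT
  have hP := Pfix_nonneg y i j hk T
  nlinarith [mul_nonneg hP (by linarith : (0:ℝ) ≤ f (insert i T) + f (insert j T) - f T - f (insert j (insert i T)))]

lemma quad_rep (f : Finset V → ℝ) (hij : i ≠ j) :
    ∃ c b0 a0 : ℝ,
      c = ∑ S : Finset V, f S * ((if i ∈ S then (1:ℝ) else -1) *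
        ((if j ∈ S then (-1:ℝ) else 1) * Pfix y i j S)) ∧
      ∀ t : ℝ, mle f (fun k => y k + t * ((if k = i then (1:ℝ) else 0) -
        (if k = j then 1 else 0))) = c * t^2 + b0 * t + a0 := by
  classical
  refine ⟨_, ∑ S : Finset V, f S * (((if i ∈ S then y i else 1 - y i) * (if j ∈ S then (-1:ℝ) else 1)
      + (if j ∈ S then y j else 1 - y j) * (if i ∈ S then (1:ℝ) else -1)) * Pfix y i j S),
    ∑ S : Finset V, f S * ((if i ∈ S then y i else 1 - y i) *
      ((if j ∈ S then y j else 1 - y j) * Pfix y i j S)), rfl, ?_⟩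
  intro t
  unfold mle
  rw [Finset.sum_mul, Finset.sum_mul, ← Finset.sum_add_distrib, ← Finset.sum_add_distrib]
  apply Finset.sum_congr rfl
  intro S _
  rw [show (∏ i_1 ∈ S, (fun k => y k + t * ((if k = i then (1:ℝ) else 0) - if k = j then 1 else 0)) i_1) *
        ∏ i_1 ∈ Sᶜ, (1 - (fun k => y k + t * ((if k = i then (1:ℝ) else 0) - if k = j then 1 else 0)) i_1) =
      ((if i ∈ S then y i else 1 - y i) + (if i ∈ S then (1:ℝ) else -1) * t) *
      (((if j ∈ S then y j else 1 - y j) + (if j ∈ S then (-1:ℝ) else 1) * t)) * Pfix y i j S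
    from key_term y i j hij S t]
  ring

end main

theorem stmt_19 {V : Type*} [Fintype V] [DecidableEq V] (f : Finset V → ℝ)
    (hmono : ∀ X Y : Finset V, X ⊆ Y → f X ≤ f Y)
    (hsub : ∀ X Y : Finset V, X ⊆ Y → ∀ e ∉ Y,
      f (insert e Y) - f Y ≤ f (insert e X) - f X)
    (y : V → ℝ) (i j : V) (hij : i ≠ j) :
    ConvexOn ℝ
      {t : ℝ | ∀ k, 0 ≤ y k + t * ((if k = i then (1 : ℝ) else 0) -
          (if k = j then 1 else 0)) ∧
        y k + t * ((if k = i then (1 : ℝ) else 0) - (if k = j then 1 else 0)) ≤ 1}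
      (fun t => mle f (fun k => y k + t * ((if k = i then (1 : ℝ) else 0) -
        (if k = j then 1 else 0)))) := by
  classical
  constructor
  · intro t1 ht1 t2 ht2 a b ha hb hab
    obtain rfl : b = 1 - a := by linarith
    intro k
    obtain ⟨h11, h12⟩ := ht1 k
    obtain ⟨h21, h22⟩ := ht2 k
    simp only [smul_eq_mul]
    set w : ℝ := (if k = i then (1:ℝ) else 0) - (if k = j then 1 else 0) with hwdef
    have key : y k + (a * t1 + (1 - a) * t2) * w
        = a * (y k + t1 * w) + (1 - a) * (y k + t2 * w) := by ring
    rw [key]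
    constructor
    · exact add_nonneg (mul_nonneg ha h11) (mul_nonneg (by linarith) h21)
    · calc a * (y k + t1 * w) + (1 - a) * (y k + t2 * w)
          ≤ a * 1 + (1 - a) * 1 := by
            apply add_le_add (mul_le_mul_of_nonneg_left h12 ha)
              (mul_le_mul_of_nonneg_left h22 (by linarith))
        _ = 1 := by ring
  · intro t1 ht1 t2 ht2 a b ha hb hab
    obtain rfl : b = 1 - a := by linarith
    have hk : ∀ k, k ≠ i → k ≠ j → 0 ≤ y k ∧ y k ≤ 1 := by
      intro k hki hkj
      have := ht1 k
      simp only [hki, hkj, if_false, sub_zero, mul_zero, add_zero] at this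
      simpa using this
    obtain ⟨c, b0, a0, hc, hrep⟩ := quad_rep y i j f hij
    have hcn : 0 ≤ c := hc ▸ c_nonneg y i j f hsub hij hk
    simp only [smul_eq_mul]
    rw [hrep, hrep, hrep]
    nlinarith [mul_nonneg (mul_nonneg (mul_nonneg hcn ha) (by linarith : (0:ℝ) ≤ 1 - a))
      (sq_nonneg (t1 - t2))]
end
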